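/- arXiv:0911.4460 — 4 statements merged into one kernel-verified Lean document; each statement's English description precedes it below -/
import Mathlib

section
/- Let A be a densely defined closed symmetric operator on a complex separable Hilbert space H. Then dom(A*) decomposes as the direct sum dom(A*) = dom(A) ⊕ ker(A* − i) ⊕ ker(A* + i), where the three summands are mutually orthogonal with respect to the graph inner product ⟨x,y⟩_G := ⟨x,y⟩ + ⟨A*x, A*y⟩ on dom(A*); in particular every x ∈ dom(A*) can be written uniquely as x = x₀ + x₊ + x₋ with x₀ ∈ dom(A), A*x₊ = i x₊ and A*x₋ = −i x₋. -/
open scoped ComplexInnerProductSpace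

noncomputable section

variable {H : Type*} [NormedAddCommGroup H] [InnerProductSpace ℂ H] [CompleteSpace H]

/-- The graph inner product `⟪x, y⟫_G := ⟪x, y⟫ + ⟪A† x, A† y⟫` on `dom A†`. -/
def graphInner (A : H →ₗ.[ℂ] H) (x y : A.adjoint.domain) : ℂ :=
  ⟪(x : H), (y : H)⟫ + ⟪A.adjoint x, A.adjoint y⟫

/-!
Since the graph of `A` is closed, `(x, A† x) = (x₀, A x₀) + (y, A† y)` with `x₀ ∈ dom A` and
`(y, A† y)` orthogonal to the graph of `A`. That orthogonality says precisely that
`A† y ∈ dom A†` and `A† (A† y) = -y`, so `(y ∓ i A† y) / 2` are eigenvectors of `A†` for `±i`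
with sum `y`. Uniqueness comes from the graph-orthogonality of the three summands: for
`x₀ ∈ dom A` and `A† y = c y`, symmetry gives `⟪x₀, y⟫_G = (1 + c²) ⟪x₀, y⟫`, and for
`A† y₊ = i y₊`, `A† y₋ = -i y₋` one has `⟪y₊, y₋⟫_G = (1 + (-i)(-i)) ⟪y₊, y₋⟫`.
-/

namespace LinearPMap

open scoped InnerProductSpace

theorem exists_eq_add_of_apply_apply_eq_neg {E : Type*} [AddCommGroup E] [Module ℂ E]
    (T : E →ₗ.[ℂ] E) {y w : T.domain} (hw : (w : E) = T y) (hTw : T w = -y) :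
    ∃ p q : T.domain,
      y = p + q ∧ T p = Complex.I • (p : E) ∧ T q = -Complex.I • (q : E) := by
  refine ⟨(2 : ℂ)⁻¹ • (y - Complex.I • w), (2 : ℂ)⁻¹ • (y + Complex.I • w), by module, ?_, ?_⟩
  all_goals
    simp only [map_smul, map_sub, map_add, hTw, ← hw, Submodule.coe_smul, Submodule.coe_sub,
      Submodule.coe_add]
    match_scalars
    · linear_combination (2⁻¹ : ℂ) * Complex.I_mul_I
    · ring

section Graph

variable {𝕜 E F : Type*} [RCLike 𝕜] [NormedAddCommGroup E] [InnerProductSpace 𝕜 E]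
  [NormedAddCommGroup F] [InnerProductSpace 𝕜 F] [CompleteSpace E]

theorem IsClosed.exists_sub_orthogonal_graph [CompleteSpace F] {T : E →ₗ.[𝕜] F}
    (hT : T.IsClosed) (u : E) (w : F) :
    ∃ z : T.domain, ∀ v : T.domain, ⟪(v : E), u - z⟫_𝕜 + ⟪T v, w - T z⟫_𝕜 = 0 := by
  let G : Submodule 𝕜 (WithLp 2 (E × F)) :=
    T.graph.comap (WithLp.linearEquiv 2 𝕜 (E × F)).toLinearMap
  have : CompleteSpace G :=
    (hT.preimage (WithLp.prodContinuousLinearEquiv 2 𝕜 E F).continuous).completeSpace_coe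
  obtain ⟨g, hg, k, hk, huw⟩ := G.exists_add_mem_mem_orthogonal (WithLp.toLp 2 (u, w))
  obtain ⟨z, hz₁, hz₂⟩ := T.mem_graph_iff.1 hg
  refine ⟨z, fun v => ?_⟩
  have hvG : WithLp.toLp 2 ((v : E), T v) ∈ G := T.mem_graph v
  have hku : u - z = k.fst := by
    rw [hz₁]; exact sub_eq_of_eq_add' (by simpa using congrArg (·.fst) huw)
  have hkw : w - T z = k.snd := by
    rw [hz₂]; exact sub_eq_of_eq_add' (by simpa using congrArg (·.snd) huw)
  rw [hku, hkw]
  simpa [WithLp.prod_inner_apply] using (G.mem_orthogonal k).1 hk _ hvG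

theorem exists_adjoint_eq_neg_of_orthogonal_graph {T : E →ₗ.[𝕜] F}
    (hT : Dense (T.domain : Set E)) {y : E} {y' : F}
    (h : ∀ v : T.domain, ⟪(v : E), y⟫_𝕜 + ⟪T v, y'⟫_𝕜 = 0) :
    ∃ hy' : y' ∈ T†.domain, T† ⟨y', hy'⟩ = -y := by
  have hadj (v : T.domain) : ⟪-y, (v : E)⟫_𝕜 = ⟪y', T v⟫_𝕜 := by
    rw [inner_neg_left, ← inner_conj_symm, ← inner_conj_symm y',
      eq_neg_of_add_eq_zero_right (h v), RingHom.map_neg]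
  have hy' := mem_adjoint_domain_of_exists y' ⟨-y, hadj⟩
  exact ⟨hy', adjoint_apply_eq hT ⟨y', hy'⟩ hadj⟩

end Graph

end LinearPMap

section Symmetric

open scoped LinearPMap

open Complex ComplexConjugate

variable {A : H →ₗ.[ℂ] H}

theorem graphInner_add_left (x y z : A†.domain) :
    graphInner A (x + y) z = graphInner A x z + graphInner A y z := by
  simp only [graphInner, Submodule.coe_add, LinearPMap.map_add, inner_add_left]
  ring

theorem eq_zero_of_graphInner_self_eq_zero {x : A†.domain} (h : graphInner A x x = 0) :
    x = 0 := by
  rw [graphInner, inner_self_eq_norm_sq_to_K, inner_self_eq_norm_sq_to_K] at h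
  have hnorm : ‖(x : H)‖ ^ 2 + ‖A† x‖ ^ 2 = 0 := by
    rw [← RCLike.ofReal_pow, ← RCLike.ofReal_pow, ← RCLike.ofReal_add] at h
    exact RCLike.ofReal_eq_zero.1 h
  have hx : ‖(x : H)‖ ^ 2 = 0 :=
    ((add_eq_zero_iff_of_nonneg (by positivity) (by positivity)).1 hnorm).1
  exact Subtype.ext (by simpa using hx)

theorem graphInner_eq_zero_of_mem_domain (hdense : Dense (A.domain : Set H)) (hA : A ≤ A†)
    {c : ℂ} (hc : c * c = -1) {x y : A†.domain} (hx : (x : H) ∈ A.domain)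
    (hy : A† y = c • (y : H)) : graphInner A x y = 0 := by
  have hAx : A† x = A ⟨x, hx⟩ := (hA.2 rfl).symm
  have hsym := (LinearPMap.adjoint_isFormalAdjoint hdense).symm ⟨x, hx⟩ y
  rw [graphInner, hAx, hy, inner_smul_right, hsym, hy, inner_smul_right, ← mul_assoc, hc]
  ring

theorem graphInner_eq_zero_of_adjoint_eq_smul {a b : ℂ} (hab : conj a * b = -1)
    {x y : A†.domain} (hx : A† x = a • (x : H)) (hy : A† y = b • (y : H)) :
    graphInner A x y = 0 := by
  rw [graphInner, hx, hy, inner_smul_left, inner_smul_right, ← mul_assoc, hab]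
  ring

def IsVonNeumannDecomposition (A : H →ₗ.[ℂ] H) (x : A†.domain)
    (p : A†.domain × A†.domain × A†.domain) : Prop :=
  x = p.1 + p.2.1 + p.2.2 ∧ (p.1 : H) ∈ A.domain ∧ A† p.2.1 = I • (p.2.1 : H) ∧
    A† p.2.2 = -I • (p.2.2 : H)

namespace IsVonNeumannDecomposition

theorem sub {x y : A†.domain} {p q : A†.domain × A†.domain × A†.domain}
    (hp : IsVonNeumannDecomposition A x p) (hq : IsVonNeumannDecomposition A y q) :
    IsVonNeumannDecomposition A (x - y) (p - q) := by
  obtain ⟨rfl, hp₀, hp₁, hp₂⟩ := hp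
  obtain ⟨rfl, hq₀, hq₁, hq₂⟩ := hq
  refine ⟨by simp only [Prod.fst_sub, Prod.snd_sub]; abel, sub_mem hp₀ hq₀, ?_, ?_⟩ <;>
    simp only [Prod.snd_sub, Prod.fst_sub, LinearPMap.map_sub, Submodule.coe_sub, smul_sub, *]

theorem eq_zero (hdense : Dense (A.domain : Set H)) (hA : A ≤ A†)
    {p : A†.domain × A†.domain × A†.domain} (hp : IsVonNeumannDecomposition A 0 p) : p = 0 := by
  obtain ⟨hsum, h₀, h₁, h₂⟩ := hp
  have hsum_inner (z : A†.domain) :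
      graphInner A p.1 z + graphInner A p.2.1 z + graphInner A p.2.2 z = 0 := by
    rw [← graphInner_add_left, ← graphInner_add_left, ← hsum]
    simp [graphInner]
  have hp₁ : p.2.1 = 0 := eq_zero_of_graphInner_self_eq_zero <| by
    simpa [graphInner_eq_zero_of_mem_domain hdense hA I_mul_I h₀ h₁,
      graphInner_eq_zero_of_adjoint_eq_smul (by simp) h₂ h₁] using hsum_inner p.2.1
  have hp₂ : p.2.2 = 0 := eq_zero_of_graphInner_self_eq_zero <| by
    simpa [graphInner_eq_zero_of_mem_domain hdense hA (by simp) h₀ h₂,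
      graphInner_eq_zero_of_adjoint_eq_smul (by simp) h₁ h₂] using hsum_inner p.2.2
  have hp₀ : p.1 = 0 := by simpa [hp₁, hp₂] using hsum.symm
  exact Prod.ext hp₀ (Prod.ext hp₁ hp₂)

theorem unique (hdense : Dense (A.domain : Set H)) (hA : A ≤ A†)
    {x : A†.domain} {p q : A†.domain × A†.domain × A†.domain}
    (hp : IsVonNeumannDecomposition A x p) (hq : IsVonNeumannDecomposition A x q) : p = q :=
  sub_eq_zero.1 <| (sub_self x ▸ hp.sub hq).eq_zero hdense hA

end IsVonNeumannDecomposition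

theorem exists_isVonNeumannDecomposition (hdense : Dense (A.domain : Set H))
    (hclosed : A.IsClosed) (hA : A ≤ A†) (x : A†.domain) :
    ∃ p, IsVonNeumannDecomposition A x p := by
  obtain ⟨z, hz⟩ := hclosed.exists_sub_orthogonal_graph (x : H) (A† x)
  obtain ⟨hw, hAw⟩ := LinearPMap.exists_adjoint_eq_neg_of_orthogonal_graph hdense hz
  let x₀ : A†.domain := ⟨z, hA.1 z.2⟩
  have hx₀ : A† x₀ = A z := (hA.2 rfl).symm
  obtain ⟨y₁, y₂, hy, hy₁, hy₂⟩ :=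
    A†.exists_eq_add_of_apply_apply_eq_neg (y := x - x₀) (w := ⟨_, hw⟩)
      (by rw [LinearPMap.map_sub, hx₀]) (by simpa using hAw)
  exact ⟨(x₀, y₁, y₂), by rw [add_assoc, ← hy]; abel, z.2, hy₁, hy₂⟩

end Symmetric

theorem vonNeumann_decomposition_general
    (A : H →ₗ.[ℂ] H)
    (hdense : Dense (A.domain : Set H))
    (hclosed : IsClosed (A.graph : Set (H × H)))
    (hsym : ∀ x y : A.domain, ⟪A x, (y : H)⟫ = ⟪(x : H), A y⟫) :
    (∀ x : A.adjoint.domain,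
      ∃! p : A.adjoint.domain × A.adjoint.domain × A.adjoint.domain,
        x = p.1 + p.2.1 + p.2.2 ∧ ((p.1 : H) ∈ A.domain) ∧
        (A.adjoint p.2.1 = (Complex.I : ℂ) • (p.2.1 : H)) ∧
        (A.adjoint p.2.2 = (-Complex.I : ℂ) • (p.2.2 : H))) ∧
    (∀ x y : A.adjoint.domain, (x : H) ∈ A.domain →
        A.adjoint y = (Complex.I : ℂ) • (y : H) → graphInner A x y = 0) ∧
    (∀ x y : A.adjoint.domain, (x : H) ∈ A.domain →
        A.adjoint y = (-Complex.I : ℂ) • (y : H) → graphInner A x y = 0) ∧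
    (∀ x y : A.adjoint.domain, A.adjoint x = (Complex.I : ℂ) • (x : H) →
        A.adjoint y = (-Complex.I : ℂ) • (y : H) → graphInner A x y = 0) := by
  have hA : A ≤ A.adjoint := LinearPMap.IsFormalAdjoint.le_adjoint hdense hsym
  refine ⟨fun x => ?_,
    fun _ _ hx hy => graphInner_eq_zero_of_mem_domain hdense hA Complex.I_mul_I hx hy,
    fun _ _ hx hy => graphInner_eq_zero_of_mem_domain hdense hA (by simp) hx hy,
    fun _ _ hx hy => graphInner_eq_zero_of_adjoint_eq_smul (by simp) hx hy⟩
  obtain ⟨p, hp⟩ := exists_isVonNeumannDecomposition hdense hclosed hA x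
  exact ⟨p, hp, fun q hq => IsVonNeumannDecomposition.unique hdense hA hq hp⟩

/-- von Neumann decomposition.  For a densely defined closed symmetric operator `A`
on a complex separable Hilbert space, every `x ∈ dom A†` can be written uniquely as
`x = x₀ + x₊ + x₋` with `x₀ ∈ dom A`, `A† x₊ = i x₊`, `A† x₋ = -i x₋`; moreover the three
summand spaces `dom A`, `ker (A† - i)`, `ker (A† + i)` are mutually orthogonal with respect to
the graph inner product. -/
theorem vonNeumann_decomposition
    [TopologicalSpace.SeparableSpace H]
    (A : H →ₗ.[ℂ] H)
    (hdense : Dense (A.domain : Set H))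
    (hclosed : IsClosed (A.graph : Set (H × H)))
    (hsym : ∀ x y : A.domain, ⟪A x, (y : H)⟫ = ⟪(x : H), A y⟫) :
    (∀ x : A.adjoint.domain,
      ∃! p : A.adjoint.domain × A.adjoint.domain × A.adjoint.domain,
        x = p.1 + p.2.1 + p.2.2 ∧ ((p.1 : H) ∈ A.domain) ∧
        (A.adjoint p.2.1 = (Complex.I : ℂ) • (p.2.1 : H)) ∧
        (A.adjoint p.2.2 = (-Complex.I : ℂ) • (p.2.2 : H))) ∧
    (∀ x y : A.adjoint.domain, (x : H) ∈ A.domain →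
        A.adjoint y = (Complex.I : ℂ) • (y : H) → graphInner A x y = 0) ∧
    (∀ x y : A.adjoint.domain, (x : H) ∈ A.domain →
        A.adjoint y = (-Complex.I : ℂ) • (y : H) → graphInner A x y = 0) ∧
    (∀ x y : A.adjoint.domain, A.adjoint x = (Complex.I : ℂ) • (x : H) →
        A.adjoint y = (-Complex.I : ℂ) • (y : H) → graphInner A x y = 0) :=
  vonNeumann_decomposition_general A hdense hclosed hsym
end
end

section
/- Let A be a densely defined closed symmetric operator on a complex separable Hilbert space H, and let D be a subspace with dom(A) ⊆ D ⊆ dom(A*) such that the extension A_D := A*|_D is self-adjoint. Then γ(D) = {γ(x) : x ∈ D} is a Lagrangian subspace of the symplectic Hilbert space (β(A), ω̂): the form ω̂ vanishes on γ(D) × γ(D), and γ(D) coincides with its annihilator {v ∈ β(A) : ω̂(v, w) = 0 for all w ∈ γ(D)}. -/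
open scoped ComplexInnerProductSpace

noncomputable section

variable {H : Type*} [NormedAddCommGroup H] [InnerProductSpace ℂ H] [CompleteSpace H]

/-- `dom A` viewed as a submodule of `dom A†` (for symmetric `A` one has `dom A ⊆ dom A†`). -/
def minDom (A : H →ₗ.[ℂ] H) : Submodule ℂ A.adjoint.domain :=
  A.domain.comap A.adjoint.domain.subtype

/-- The abstract boundary space `β(A) := dom A† / dom A`. -/
abbrev beta (A : H →ₗ.[ℂ] H) := A.adjoint.domain ⧸ minDom A

/-- The natural quotient map `γ : dom A† → β(A)`. -/
def gammaMap (A : H →ₗ.[ℂ] H) : A.adjoint.domain →ₗ[ℂ] beta A :=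
  (minDom A).mkQ

/-- The Green form `ω(x,y) := ⟪A† x, y⟫ - ⟪x, A† y⟫` on `dom A†`. -/
def omegaForm (A : H →ₗ.[ℂ] H) (x y : A.adjoint.domain) : ℂ :=
  ⟪A.adjoint x, (y : H)⟫ - ⟪(x : H), A.adjoint y⟫

/-- The induced form `ω̂` on `β(A)`, computed on representatives.  (For a closed symmetric `A`
this is well defined, i.e. independent of the representatives.) -/
def omegaHat (A : H →ₗ.[ℂ] H) (v w : beta A) : ℂ :=
  omegaForm A (Quotient.out v) (Quotient.out w)

/-- The restriction `A_D := A†|_D` of the adjoint to an intermediate subspace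
`dom A ⊆ D ⊆ dom A†`, as a partially defined operator on `H`. -/
def adjRestrict (A : H →ₗ.[ℂ] H) (D : Submodule ℂ A.adjoint.domain) : H →ₗ.[ℂ] H :=
  A.adjoint.domRestrict (D.map A.adjoint.domain.subtype)

/-! An `x ∈ dom A†` lies in `dom (A_D)†` exactly when `ω(x, d) = 0` for all `d ∈ D`. Hence `γ(D)`
is isotropic because `A_D` is symmetric, and it contains its annihilator because `dom (A_D)† = D`.
The form `ω̂` is well defined since, by the symmetry of `A`, `ω` vanishes as soon as one argument
lies in `dom A`. -/

open LinearPMap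

theorem IsSelfAdjoint.isFormalAdjoint {E : Type*} [NormedAddCommGroup E] [InnerProductSpace ℂ E]
    [CompleteSpace E] {T : E →ₗ.[ℂ] E} (hT : IsSelfAdjoint T) : T.IsFormalAdjoint T := by
  have h := adjoint_isFormalAdjoint hT.dense_domain
  rwa [isSelfAdjoint_def.mp hT] at h

section GreenForm

variable {A : H →ₗ.[ℂ] H}

lemma omegaForm_sub_left (x x' y : A.adjoint.domain) :
    omegaForm A (x - x') y = omegaForm A x y - omegaForm A x' y := by
  simp only [omegaForm, LinearPMap.map_sub, Submodule.coe_sub, inner_sub_left]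
  ring

lemma omegaForm_sub_right (x y y' : A.adjoint.domain) :
    omegaForm A x (y - y') = omegaForm A x y - omegaForm A x y' := by
  simp only [omegaForm, LinearPMap.map_sub, Submodule.coe_sub, inner_sub_right]
  ring

lemma omegaForm_swap (x y : A.adjoint.domain) :
    omegaForm A y x = -starRingEnd ℂ (omegaForm A x y) := by
  simp only [omegaForm, _root_.map_sub, inner_conj_symm]
  ring

lemma adjoint_apply_of_mem_domain (hdense : Dense (A.domain : Set H)) (hA : A.IsFormalAdjoint A)
    (y : A.adjoint.domain) (hy : (y : H) ∈ A.domain) : A.adjoint y = A ⟨y, hy⟩ :=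
  ((hA.le_adjoint hdense).2 rfl).symm

lemma omegaForm_eq_zero_of_mem_minDom_right (hdense : Dense (A.domain : Set H))
    (hA : A.IsFormalAdjoint A) (x : A.adjoint.domain) {y : A.adjoint.domain}
    (hy : y ∈ minDom A) : omegaForm A x y = 0 := by
  rw [omegaForm, adjoint_apply_of_mem_domain hdense hA y hy,
    adjoint_isFormalAdjoint hdense x ⟨y, hy⟩, sub_self]

lemma omegaForm_eq_zero_of_mem_minDom_left (hdense : Dense (A.domain : Set H))
    (hA : A.IsFormalAdjoint A) {x : A.adjoint.domain} (hx : x ∈ minDom A)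
    (y : A.adjoint.domain) : omegaForm A x y = 0 := by
  rw [omegaForm_swap, omegaForm_eq_zero_of_mem_minDom_right hdense hA y hx, _root_.map_zero,
    neg_zero]

lemma omegaForm_congr (hdense : Dense (A.domain : Set H)) (hA : A.IsFormalAdjoint A)
    {x x' y y' : A.adjoint.domain} (hx : x - x' ∈ minDom A) (hy : y - y' ∈ minDom A) :
    omegaForm A x y = omegaForm A x' y' := by
  have hleft := omegaForm_eq_zero_of_mem_minDom_left hdense hA hx y
  have hright := omegaForm_eq_zero_of_mem_minDom_right hdense hA x' hy
  rw [omegaForm_sub_left] at hleft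
  rw [omegaForm_sub_right] at hright
  linear_combination hleft + hright

lemma gammaMap_surjective : Function.Surjective (gammaMap A) :=
  Submodule.mkQ_surjective _

lemma omegaHat_gammaMap (hdense : Dense (A.domain : Set H)) (hA : A.IsFormalAdjoint A)
    (x y : A.adjoint.domain) : omegaHat A (gammaMap A x) (gammaMap A y) = omegaForm A x y :=
  omegaForm_congr hdense hA ((Submodule.Quotient.eq _).mp (Quotient.out_eq _))
    ((Submodule.Quotient.eq _).mp (Quotient.out_eq _))

end GreenForm

section Restriction

variable {A : H →ₗ.[ℂ] H} {D : Submodule ℂ A.adjoint.domain}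

lemma coe_mem_adjRestrict_domain_iff {x : A.adjoint.domain} :
    (x : H) ∈ (adjRestrict A D).domain ↔ x ∈ D := by
  refine ⟨fun hx => ?_, fun hx => Submodule.mem_inf.mpr ⟨Submodule.mem_map_of_mem hx, x.2⟩⟩
  obtain ⟨d, hd, hdx⟩ := (Submodule.mem_inf.mp hx).1
  rwa [← Subtype.ext hdx]

lemma adjRestrict_apply {x : (adjRestrict A D).domain} {y : A.adjoint.domain}
    (h : (x : H) = y) : adjRestrict A D x = A.adjoint y :=
  domRestrict_apply h

lemma omegaForm_eq_zero_of_isFormalAdjoint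
    (hD : (adjRestrict A D).IsFormalAdjoint (adjRestrict A D)) {d e : A.adjoint.domain}
    (hd : d ∈ D) (he : e ∈ D) : omegaForm A d e = 0 := by
  have h := hD ⟨d, coe_mem_adjRestrict_domain_iff.mpr hd⟩
    ⟨e, coe_mem_adjRestrict_domain_iff.mpr he⟩
  rw [adjRestrict_apply rfl, adjRestrict_apply rfl] at h
  rw [omegaForm, h, sub_self]

lemma coe_mem_adjoint_adjRestrict_domain {x : A.adjoint.domain}
    (hx : ∀ d ∈ D, omegaForm A x d = 0) : (x : H) ∈ (adjRestrict A D).adjoint.domain := by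
  refine mem_adjoint_domain_of_exists _ ⟨A.adjoint x, fun u => ?_⟩
  obtain ⟨d, hd, hdu⟩ := (Submodule.mem_inf.mp u.2).1
  rw [adjRestrict_apply hdu.symm, ← hdu]
  exact sub_eq_zero.mp (hx d hd)

lemma mem_of_forall_omegaForm_eq_zero (hsa : IsSelfAdjoint (adjRestrict A D))
    {x : A.adjoint.domain} (hx : ∀ d ∈ D, omegaForm A x d = 0) : x ∈ D := by
  have h := coe_mem_adjoint_adjRestrict_domain hx
  rwa [isSelfAdjoint_def.mp hsa, coe_mem_adjRestrict_domain_iff] at h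

end Restriction

theorem selfAdjoint_extension_gives_lagrangian_general
    (A : H →ₗ.[ℂ] H)
    (hdense : Dense (A.domain : Set H))
    (hsym : ∀ x y : A.domain, ⟪A x, (y : H)⟫ = ⟪(x : H), A y⟫)
    (D : Submodule ℂ A.adjoint.domain)
    (hsa : IsSelfAdjoint (adjRestrict A D)) :
    (∀ v ∈ D.map (gammaMap A), ∀ w ∈ D.map (gammaMap A), omegaHat A v w = 0) ∧
    {v : beta A | ∀ w ∈ D.map (gammaMap A), omegaHat A v w = 0}
      = (D.map (gammaMap A) : Set (beta A)) := by
  have isotropic : ∀ v ∈ D.map (gammaMap A), ∀ w ∈ D.map (gammaMap A), omegaHat A v w = 0 := by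
    rintro _ ⟨d, hd, rfl⟩ _ ⟨e, he, rfl⟩
    rw [omegaHat_gammaMap hdense hsym]
    exact omegaForm_eq_zero_of_isFormalAdjoint hsa.isFormalAdjoint hd he
  refine ⟨isotropic, Set.ext fun v => ⟨fun hv => ?_, isotropic v⟩⟩
  obtain ⟨x, rfl⟩ := gammaMap_surjective v
  refine ⟨x, mem_of_forall_omegaForm_eq_zero hsa fun d hd => ?_, rfl⟩
  rw [← omegaHat_gammaMap hdense hsym]
  exact hv _ (Submodule.mem_map_of_mem hd)

/-- If `dom A ⊆ D ⊆ dom A†` and the extension `A_D := A†|_D` is self-adjoint,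
then `γ(D)` is a Lagrangian subspace of `(β(A), ω̂)`: the form `ω̂` vanishes on `γ(D) × γ(D)`,
and `γ(D)` coincides with its annihilator `{v ∈ β(A) : ω̂(v, w) = 0 ∀ w ∈ γ(D)}`. -/
theorem selfAdjoint_extension_gives_lagrangian
    [TopologicalSpace.SeparableSpace H]
    (A : H →ₗ.[ℂ] H)
    (hdense : Dense (A.domain : Set H))
    (hclosed : IsClosed (A.graph : Set (H × H)))
    (hsym : ∀ x y : A.domain, ⟪A x, (y : H)⟫ = ⟪(x : H), A y⟫)
    (D : Submodule ℂ A.adjoint.domain)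
    (hD : minDom A ≤ D)
    (hsa : IsSelfAdjoint (adjRestrict A D)) :
    (∀ v ∈ D.map (gammaMap A), ∀ w ∈ D.map (gammaMap A), omegaHat A v w = 0) ∧
    {v : beta A | ∀ w ∈ D.map (gammaMap A), omegaHat A v w = 0}
      = (D.map (gammaMap A) : Set (beta A)) :=
  selfAdjoint_extension_gives_lagrangian_general A hdense hsym D hsa
end
end

section
/- Let A be a densely defined closed symmetric operator on a complex separable Hilbert space H, and let D be a subspace with dom(A) ⊆ D ⊆ dom(A*) such that A_D := A*|_D is self-adjoint and bijective as a map D → H (0 is in the resolvent set of A_D). Then dom(A*) decomposes as the algebraic direct sum dom(A*) = D ⊕ ker(A*): every x ∈ dom(A*) can be written uniquely as x = d + k with d ∈ D and k ∈ dom(A*), A*k = 0. -/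
open scoped ComplexInnerProductSpace

noncomputable section

variable {H : Type*} [NormedAddCommGroup H] [InnerProductSpace ℂ H] [CompleteSpace H]

theorem LinearMap.existsUnique_add_of_bijective_restrict {R M N : Type*} [Ring R]
    [AddCommGroup M] [Module R M] [AddCommGroup N] [Module R N]
    (f : M →ₗ[R] N) (D : Submodule R M) (hf : Function.Bijective fun d : D => f d) (x : M) :
    ∃! p : M × M, x = p.1 + p.2 ∧ p.1 ∈ D ∧ f p.2 = 0 := by
  obtain ⟨d, hd⟩ := hf.surjective (f x)
  refine ⟨((d : M), x - d), ⟨(add_sub_cancel _ _).symm, d.2, ?_⟩, ?_⟩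
  · simp only [map_sub, hd, sub_self]
  · rintro ⟨e, k⟩ ⟨rfl, he, hk⟩
    have hed : (⟨e, he⟩ : D) = d := hf.injective <| by
      simp only [hd, map_add, hk, add_zero]
    obtain rfl : e = d := congrArg Subtype.val hed
    simp only [add_sub_cancel_left]

theorem domain_decomposition_of_invertible_selfAdjoint_extension_general
    (A : H →ₗ.[ℂ] H)
    (D : Submodule ℂ A.adjoint.domain)
    (hbij : Function.Bijective fun d : D => A.adjoint (d : A.adjoint.domain)) :
    ∀ x : A.adjoint.domain,
      ∃! p : A.adjoint.domain × A.adjoint.domain,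
        x = p.1 + p.2 ∧ p.1 ∈ D ∧ A.adjoint p.2 = 0 :=
  A.adjoint.toFun.existsUnique_add_of_bijective_restrict D hbij

/-- If `dom A ⊆ D ⊆ dom A†`, the extension `A_D := A†|_D` is self-adjoint, and
`A_D : D → H` is bijective (i.e. `0` is in the resolvent set of `A_D`), then
`dom A† = D ⊕ ker A†` algebraically: every `x ∈ dom A†` is uniquely `x = d + k` with
`d ∈ D` and `A† k = 0`. -/
theorem domain_decomposition_of_invertible_selfAdjoint_extension
    [TopologicalSpace.SeparableSpace H]
    (A : H →ₗ.[ℂ] H)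
    (hdense : Dense (A.domain : Set H))
    (hclosed : IsClosed (A.graph : Set (H × H)))
    (hsym : ∀ x y : A.domain, ⟪A x, (y : H)⟫ = ⟪(x : H), A y⟫)
    (D : Submodule ℂ A.adjoint.domain)
    (hD : minDom A ≤ D)
    (hsa : IsSelfAdjoint (adjRestrict A D))
    (hbij : Function.Bijective fun d : D => A.adjoint (d : A.adjoint.domain)) :
    ∀ x : A.adjoint.domain,
      ∃! p : A.adjoint.domain × A.adjoint.domain,
        x = p.1 + p.2 ∧ p.1 ∈ D ∧ A.adjoint p.2 = 0 :=
  domain_decomposition_of_invertible_selfAdjoint_extension_general A D hbij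
end
end

section
/- Let A be a densely defined closed symmetric operator on a complex separable Hilbert space H satisfying weak inner unique continuation, ker(A*) ∩ dom(A) = {0}, and let D be a subspace with dom(A) ⊆ D ⊆ dom(A*) such that A_D := A*|_D is self-adjoint. Then the quotient map γ restricts to a linear isomorphism from ker(A_D) = ker(A*) ∩ D onto CD(A) ∩ γ(D); in particular dim(CD(A) ∩ γ(D)) = dim ker(A_D). -/
/-!
The kernel of `γ` is exactly `dom A`. Weak inner unique continuation says that `ker A†` meets
`dom A` trivially, so `γ` is injective on `ker A† ∩ D`. Since `D ⊇ dom A = ker γ`, any `x ∈ ker A†`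
with `γ x = γ d` for some `d ∈ D` already lies in `D`, so `γ(ker A† ∩ D) = γ(ker A†) ∩ γ(D)`.
-/

open scoped ComplexInnerProductSpace

noncomputable section

variable {H : Type*} [NormedAddCommGroup H] [InnerProductSpace ℂ H] [CompleteSpace H]

/-- The natural Cauchy data space `CD(A) := γ(ker A†) ⊆ β(A)`. -/
def cauchyData (A : H →ₗ.[ℂ] H) : Submodule ℂ (beta A) :=
  (LinearMap.ker A.adjoint.toFun).map (gammaMap A)

namespace Submodule

variable {R M N : Type*} [Ring R] [AddCommGroup M] [AddCommGroup N] [Module R M] [Module R N]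

theorem map_inf_of_ker_le (f : M →ₗ[R] N) (K : Submodule R M) {D : Submodule R M}
    (hD : LinearMap.ker f ≤ D) : (K ⊓ D).map f = K.map f ⊓ D.map f := by
  refine le_antisymm (map_inf_le f) ?_
  rintro _ ⟨⟨k, hk, rfl⟩, d, hd, hdk⟩
  have hkd : k - d ∈ D := hD (LinearMap.sub_mem_ker_iff.mpr hdk.symm)
  exact ⟨k, ⟨hk, by simpa using add_mem hkd hd⟩, rfl⟩

theorem exists_linearEquiv_map_of_disjoint_ker {f : M →ₗ[R] N} {p : Submodule R M}
    (h : Disjoint p (LinearMap.ker f)) : ∃ e : p ≃ₗ[R] p.map f, ∀ x, (e x : N) = f x := by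
  have hinj : Function.Injective (f.domRestrict p) := LinearMap.injective_domRestrict_iff.mpr h
  exact ⟨(LinearEquiv.ofInjective _ hinj).trans
    (LinearEquiv.ofEq _ _ (LinearMap.range_domRestrict p f)), fun _ => rfl⟩

theorem exists_linearEquiv_inf_map_inf {f : M →ₗ[R] N} {K D : Submodule R M}
    (hK : Disjoint K (LinearMap.ker f)) (hD : LinearMap.ker f ≤ D) :
    ∃ e : (K ⊓ D : Submodule R M) ≃ₗ[R] (K.map f ⊓ D.map f : Submodule R N),
      ∀ x, (e x : N) = f x := by
  rw [← map_inf_of_ker_le f K hD]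
  exact exists_linearEquiv_map_of_disjoint_ker (hK.mono_left inf_le_left)

end Submodule

theorem ker_gammaMap (A : H →ₗ.[ℂ] H) : LinearMap.ker (gammaMap A) = minDom A :=
  Submodule.ker_mkQ _

theorem disjoint_ker_adjoint_ker_gammaMap {A : H →ₗ.[ℂ] H}
    (hUCP : ∀ x : A.adjoint.domain, A.adjoint x = 0 → (x : H) ∈ A.domain → x = 0) :
    Disjoint (LinearMap.ker A.adjoint.toFun) (LinearMap.ker (gammaMap A)) := by
  rw [ker_gammaMap, Submodule.disjoint_def]
  exact hUCP

theorem gamma_iso_kernel_of_weak_inner_UCP_general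
    (A : H →ₗ.[ℂ] H)
    (hUCP : ∀ x : A.adjoint.domain, A.adjoint x = 0 → (x : H) ∈ A.domain → x = 0)
    (D : Submodule ℂ A.adjoint.domain)
    (hD : minDom A ≤ D) :
    (∃ e : (LinearMap.ker A.adjoint.toFun ⊓ D : Submodule ℂ A.adjoint.domain) ≃ₗ[ℂ]
        (cauchyData A ⊓ D.map (gammaMap A) : Submodule ℂ (beta A)),
      ∀ x : (LinearMap.ker A.adjoint.toFun ⊓ D : Submodule ℂ A.adjoint.domain),
        (e x : beta A) = gammaMap A (x : A.adjoint.domain)) ∧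
    Module.rank ℂ (LinearMap.ker A.adjoint.toFun ⊓ D : Submodule ℂ A.adjoint.domain)
      = Module.rank ℂ (cauchyData A ⊓ D.map (gammaMap A) : Submodule ℂ (beta A)) := by
  obtain ⟨e, he⟩ := Submodule.exists_linearEquiv_inf_map_inf
    (disjoint_ker_adjoint_ker_gammaMap hUCP) ((ker_gammaMap A).trans_le hD)
  exact ⟨⟨e, he⟩, e.rank_eq⟩

/-- If `A` satisfies weak inner unique continuation, `ker A† ∩ dom A = {0}`,
and `A_D := A†|_D` is self-adjoint for some `dom A ⊆ D ⊆ dom A†`, then `γ` restricts to a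
linear isomorphism from `ker A_D = ker A† ∩ D` onto `CD(A) ∩ γ(D)`; in particular the two
spaces have the same dimension. -/
theorem gamma_iso_kernel_of_weak_inner_UCP
    [TopologicalSpace.SeparableSpace H]
    (A : H →ₗ.[ℂ] H)
    (hdense : Dense (A.domain : Set H))
    (hclosed : IsClosed (A.graph : Set (H × H)))
    (hsym : ∀ x y : A.domain, ⟪A x, (y : H)⟫ = ⟪(x : H), A y⟫)
    (hUCP : ∀ x : A.adjoint.domain, A.adjoint x = 0 → (x : H) ∈ A.domain → x = 0)
    (D : Submodule ℂ A.adjoint.domain)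
    (hD : minDom A ≤ D)
    (hsa : IsSelfAdjoint (adjRestrict A D)) :
    (∃ e : (LinearMap.ker A.adjoint.toFun ⊓ D : Submodule ℂ A.adjoint.domain) ≃ₗ[ℂ]
        (cauchyData A ⊓ D.map (gammaMap A) : Submodule ℂ (beta A)),
      ∀ x : (LinearMap.ker A.adjoint.toFun ⊓ D : Submodule ℂ A.adjoint.domain),
        (e x : beta A) = gammaMap A (x : A.adjoint.domain)) ∧
    Module.rank ℂ (LinearMap.ker A.adjoint.toFun ⊓ D : Submodule ℂ A.adjoint.domain)
      = Module.rank ℂ (cauchyData A ⊓ D.map (gammaMap A) : Submodule ℂ (beta A)) :=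
  gamma_iso_kernel_of_weak_inner_UCP_general A hUCP D hD
end
end
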